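/- (Theorem 1, Case 5.) Fix an altitude ĥ > 0 and assume X > 0, SIR1(0,ĥ) ≥ SIR2(0,ĥ), Ψˣ(ĥ) < D, and SIR1(Ψˣ(ĥ),ĥ) > SIR2(Ψˣ(ĥ),ĥ). Then SIR_S(x,ĥ) ≤ SIR_S(D,ĥ) for every x ∈ [0,D]; that is, the optimal horizontal position is x* = D. -/
import Mathlib
set_option maxHeartbeats 800000


/-- SIR at the UAV located at (x,0,h). -/
noncomputable def SIR1 (pt pM X Y x h : ℝ) : ℝ :=
  pt * ((x - X) ^ 2 + Y ^ 2 + h ^ 2) / (pM * (x ^ 2 + h ^ 2))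

/-- SIR at the Rx when the UAV is located at (x,0,h). -/
noncomputable def SIR2 (pu κ pM D X Y x h : ℝ) : ℝ :=
  pu * κ * (Y ^ 2 + (D - X) ^ 2) / (pM * ((D - x) ^ 2 + h ^ 2))

/-- SIR of the system. -/
noncomputable def SIRS (pt pu κ pM D X Y x h : ℝ) : ℝ :=
  min (SIR1 pt pM X Y x h) (SIR2 pu κ pM D X Y x h)

/-- The horizontal stationary point Ψˣ(h). -/
noncomputable def PsiX (X Y h : ℝ) : ℝ :=
  (X ^ 2 + Y ^ 2 + Real.sqrt ((X ^ 2 + Y ^ 2) ^ 2 + 4 * X ^ 2 * h ^ 2)) / (2 * X)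

theorem stmt10 (D X Y pt pu pM κ : ℝ) (hD : 0 < D) (hX0 : 0 ≤ X) (hXD : X ≤ D)
    (hpt : 0 < pt) (hpu : 0 < pu) (hpM : 0 < pM) (hκ : 0 < κ)
    (hhat : ℝ) (hhat_pos : 0 < hhat) (hX : 0 < X)
    (hc1 : SIR1 pt pM X Y 0 hhat ≥ SIR2 pu κ pM D X Y 0 hhat)
    (hc2 : PsiX X Y hhat < D)
    (hc3 : SIR1 pt pM X Y (PsiX X Y hhat) hhat > SIR2 pu κ pM D X Y (PsiX X Y hhat) hhat) :
    ∀ x ∈ Set.Icc (0 : ℝ) D,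
      SIRS pt pu κ pM D X Y x hhat ≤ SIRS pt pu κ pM D X Y D hhat := by
  intro x hx
  obtain ⟨hx0, hxD⟩ := hx
  set Ψ := PsiX X Y hhat with hΨdef
  have hS0 : (0:ℝ) < X ^ 2 + Y ^ 2 := by positivity
  have hR0 : (0:ℝ) ≤ (X ^ 2 + Y ^ 2) ^ 2 + 4 * X ^ 2 * hhat ^ 2 := by positivity
  set R := Real.sqrt ((X ^ 2 + Y ^ 2) ^ 2 + 4 * X ^ 2 * hhat ^ 2) with hRdef
  have hRsq : R ^ 2 = (X ^ 2 + Y ^ 2) ^ 2 + 4 * X ^ 2 * hhat ^ 2 := Real.sq_sqrt hR0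
  have hRpos : 0 ≤ R := Real.sqrt_nonneg _
  have hRS : X ^ 2 + Y ^ 2 < R := by
    rw [hRdef]
    refine (Real.lt_sqrt (by positivity)).mpr ?_
    have : (0:ℝ) < 4 * X ^ 2 * hhat ^ 2 := by positivity
    linarith
  have h2XΨ : 2 * X * Ψ = (X ^ 2 + Y ^ 2) + R := by
    rw [hΨdef]; unfold PsiX; rw [← hRdef]; field_simp
  have hq0 : X * Ψ ^ 2 - (X ^ 2 + Y ^ 2) * Ψ - X * hhat ^ 2 = 0 := by nlinarith
  have hΨpos : 0 < Ψ := by nlinarith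
  have hXΨS : X ^ 2 + Y ^ 2 < X * Ψ := by nlinarith
  have hd : ∀ t : ℝ, 0 < pM * (t ^ 2 + hhat ^ 2) := fun t => by positivity
  -- SIR2 is monotone nondecreasing on (-∞, D]
  have mono2 : ∀ a b : ℝ, a ≤ b → b ≤ D →
      SIR2 pu κ pM D X Y a hhat ≤ SIR2 pu κ pM D X Y b hhat := by
    intro a b hab hbD
    unfold SIR2
    rw [div_le_div_iff₀ (hd _) (hd _)]
    have hN : (0:ℝ) ≤ pu * κ * (Y ^ 2 + (D - X) ^ 2) := by positivity
    have hdd : pM * ((D - b) ^ 2 + hhat ^ 2) ≤ pM * ((D - a) ^ 2 + hhat ^ 2) := by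
      nlinarith [mul_nonneg hpM.le (mul_nonneg (sub_nonneg.mpr hab) (sub_nonneg.mpr hbD)),
        mul_nonneg hpM.le (mul_nonneg (sub_nonneg.mpr hab) (sub_nonneg.mpr (hab.trans hbD)))]
    exact mul_le_mul_of_nonneg_left hdd hN
  -- SIR1 decreasing on [0, Ψ]
  have mono1dec : ∀ a b : ℝ, 0 ≤ a → a ≤ b → b ≤ Ψ →
      SIR1 pt pM X Y b hhat ≤ SIR1 pt pM X Y a hhat := by
    intro a b ha hab hbΨ
    have qa : X * a ^ 2 - (X ^ 2 + Y ^ 2) * a - X * hhat ^ 2 ≤ 0 := by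
      nlinarith [mul_nonneg ha (sub_nonneg.mpr (hab.trans hbΨ))]
    have qb : X * b ^ 2 - (X ^ 2 + Y ^ 2) * b - X * hhat ^ 2 ≤ 0 := by
      nlinarith [mul_nonneg (ha.trans hab) (sub_nonneg.mpr hbΨ)]
    unfold SIR1
    rw [div_le_div_iff₀ (hd _) (hd _)]
    nlinarith [mul_nonneg (mul_pos hpt hpM).le
      (mul_nonneg (sub_nonneg.mpr hab)
        (by nlinarith [sq_nonneg (a - b)] :
          (0:ℝ) ≤ (X ^ 2 + Y ^ 2) * (a + b) + 2 * X * (hhat ^ 2 - a * b)))]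
  -- SIR1 increasing on [Ψ, ∞)
  have mono1inc : ∀ a b : ℝ, Ψ ≤ a → a ≤ b →
      SIR1 pt pM X Y a hhat ≤ SIR1 pt pM X Y b hhat := by
    intro a b hΨa hab
    have key : (0:ℝ) ≤ 2 * X * (a * b) - (X ^ 2 + Y ^ 2) * (a + b) - 2 * X * hhat ^ 2 := by
      nlinarith [mul_nonneg (sub_nonneg.mpr hΨa) (sub_nonneg.mpr (hΨa.trans hab)),
        sub_nonneg.mpr hΨa, sub_nonneg.mpr (hΨa.trans hab)]
    unfold SIR1
    rw [div_le_div_iff₀ (hd _) (hd _)]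
    nlinarith [mul_nonneg (mul_pos hpt hpM).le
      (mul_nonneg (sub_nonneg.mpr hab) key)]
  by_cases hxΨ : x ≤ Ψ
  · have h2D : SIR2 pu κ pM D X Y x hhat ≤ SIR2 pu κ pM D X Y D hhat :=
      mono2 x D hxD le_rfl
    have h2Ψ : SIR2 pu κ pM D X Y x hhat ≤ SIR2 pu κ pM D X Y Ψ hhat :=
      mono2 x Ψ hxΨ hc2.le
    have h1DΨ : SIR1 pt pM X Y Ψ hhat ≤ SIR1 pt pM X Y D hhat :=
      mono1inc Ψ D le_rfl hc2.le
    have h2x1D : SIR2 pu κ pM D X Y x hhat ≤ SIR1 pt pM X Y D hhat :=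
      h2Ψ.trans (hc3.le.trans h1DΨ)
    exact (min_le_right _ _).trans (le_min h2x1D h2D)
  · push_neg at hxΨ
    exact min_le_min (mono1inc x D hxΨ.le hxD) (mono2 x D hxD le_rfl)
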